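/- arXiv:2101.10229 — 4 statements merged into one kernel-verified Lean document; each statement's English description precedes it below -/
import Mathlib

section
/- Let p ∈ [1, ∞), T > 0, and let 0 = t_0 < t_1 < … < t_L = T. Suppose P : [0,T) → ℝ^{n×n} is the piecewise constant function with P(t) = P^(l) for t_{l−1} ≤ t < t_l, where each P^(l) ∈ ℝ^{n×n} satisfies det P^(l) > 0. Then there exists a constant C > 0 such that for every ε > 0 there exists a continuous function P^ε : [0,T] → ℝ^{n×n} with ‖P^ε − P‖_{L^p(0,T;ℝ^{n×n})} < ε, det P^ε(t) > 0 for all t ∈ [0,T], and ‖P^ε(t)‖ ≤ C for all t ∈ [0,T], where ‖·‖ denotes the Frobenius norm on ℝ^{n×n}. -/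
/-!
Matrices of positive determinant form a path-connected set: by Gaussian elimination every such
matrix is a product of transvections and a diagonal matrix of positive determinant, a transvection
is joined to `1` by scaling its off-diagonal entry, and a diagonal matrix is joined to `1` after
its negative entries have been flipped in pairs, each pair flip being the square of a rotation by
`π / 2`, which is a product of three transvections.

Hence one path `Γ` with positive determinant passes through all the values `P^(l)`, say at the
parameters `τ l`. Composing `Γ` with a continuous piecewise-linear function that equals `τ l` on
`[t_{l-1}, t_l - δ]` gives `P^ε`. It agrees with `P` outside a set of measure at most `L δ`, and
it is bounded by the maximum of `‖Γ‖`, which does not depend on `ε`.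
-/

noncomputable def frobNorm {n : ℕ} (M : Matrix (Fin n) (Fin n) ℝ) : ℝ :=
  Real.sqrt (∑ i, ∑ j, (M i j) ^ 2)

open Matrix Set MeasureTheory

theorem frobNorm_nonneg {n : ℕ} (M : Matrix (Fin n) (Fin n) ℝ) : 0 ≤ frobNorm M :=
  Real.sqrt_nonneg _

@[simp]
theorem frobNorm_zero {n : ℕ} : frobNorm (0 : Matrix (Fin n) (Fin n) ℝ) = 0 := by
  simp [frobNorm]

theorem frobNorm_eq_norm {n : ℕ} (M : Matrix (Fin n) (Fin n) ℝ) :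
    frobNorm M = @norm _ frobeniusSeminormedAddCommGroup.toNorm M := by
  rw [frobenius_norm_def, frobNorm, Real.sqrt_eq_rpow]
  simp only [Real.norm_eq_abs, Real.rpow_two, sq_abs]

theorem frobNorm_sub_le {n : ℕ} (A B : Matrix (Fin n) (Fin n) ℝ) :
    frobNorm (A - B) ≤ frobNorm A + frobNorm B := by
  simp only [frobNorm_eq_norm]
  exact @norm_sub_le _ frobeniusSeminormedAddCommGroup.toSeminormedAddGroup A B

theorem continuous_frobNorm {n : ℕ} : Continuous (frobNorm (n := n)) := by
  unfold frobNorm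
  fun_prop

theorem IsCompact.exists_pos_frobNorm_le {n : ℕ} {K : Set (Matrix (Fin n) (Fin n) ℝ)}
    (hK : IsCompact K) : ∃ C > 0, ∀ M ∈ K, frobNorm M ≤ C := by
  obtain ⟨C, hC⟩ := (hK.image continuous_frobNorm).bddAbove
  exact ⟨max C 1, by positivity, fun M hM => (hC ⟨M, hM, rfl⟩).trans (le_max_left _ _)⟩

namespace Matrix

variable {n : Type*} [Fintype n] [DecidableEq n]

theorem joinedIn_det_pos_mul {A B C D : Matrix n n ℝ}
    (h₁ : JoinedIn {M | 0 < M.det} A B) (h₂ : JoinedIn {M | 0 < M.det} C D) :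
    JoinedIn {M : Matrix n n ℝ | 0 < M.det} (A * C) (B * D) :=
  (h₁.mul h₂).mono <| Set.mul_subset_iff.2 fun X hX Y hY => by
    simpa only [mem_ofPred_eq, det_mul] using mul_pos hX hY

theorem joinedIn_det_pos_one_transvection {i j : n} (h : i ≠ j) (c : ℝ) :
    JoinedIn {M : Matrix n n ℝ | 0 < M.det} 1 (transvection i j c) := by
  refine JoinedIn.ofLine (f := fun s => transvection i j (s * c)) ?_ (by simp) (by simp) ?_
  · refine (continuous_const.add (continuous_matrix fun a b => ?_)).continuousOn
    simp only [single_apply]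
    split_ifs <;> fun_prop
  · rintro _ ⟨s, -, rfl⟩
    simp [det_transvection_of_ne _ _ h]

/-- The product of the three transvections is the rotation by `π / 2` in the `(i, j)`-plane. -/
theorem transvection_mul_transvection_mul_transvection_sq {i j : n} (h : i ≠ j) :
    (transvection i j (-1 : ℝ) * transvection j i 1 * transvection i j (-1)) ^ 2 =
      diagonal fun k => if k = i ∨ k = j then -1 else 1 := by
  simp only [sq, transvection, mul_add, add_mul, mul_one, one_mul, mul_assoc,
    single_mul_single_same, single_mul_single_of_ne _ _ _ _ h,
    single_mul_single_of_ne _ _ _ _ h.symm, add_zero]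
  ext a b
  simp only [Matrix.add_apply, single_apply, one_apply, diagonal_apply]
  split_ifs <;> grind

theorem joinedIn_det_pos_one_diagonal_neg_pair {i j : n} (h : i ≠ j) :
    JoinedIn {M : Matrix n n ℝ | 0 < M.det} 1
      (diagonal fun k => if k = i ∨ k = j then -1 else 1) := by
  have hR := joinedIn_det_pos_mul (joinedIn_det_pos_mul (joinedIn_det_pos_one_transvection h (-1))
    (joinedIn_det_pos_one_transvection h.symm 1)) (joinedIn_det_pos_one_transvection h (-1))
  rw [← transvection_mul_transvection_mul_transvection_sq h, sq]
  simpa only [mul_one] using joinedIn_det_pos_mul hR hR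

theorem joinedIn_det_pos_one_diagonal_of_pos {D : n → ℝ} (hD : ∀ i, 0 < D i) :
    JoinedIn {M : Matrix n n ℝ | 0 < M.det} 1 (diagonal D) := by
  refine JoinedIn.ofLine (f := fun s => diagonal fun i => D i ^ s) ?_ (by simp) (by simp) ?_
  · exact (continuous_pi fun i => continuous_const.rpow continuous_id fun _ =>
      Or.inl (hD i).ne').matrix_diagonal.continuousOn
  · rintro _ ⟨s, -, rfl⟩
    simpa [det_diagonal] using Finset.prod_pos fun i _ => Real.rpow_pos_of_pos (hD i) s

theorem exists_ne_neg_of_det_diagonal_pos {D : n → ℝ} (hD : 0 < (diagonal D).det) {i : n}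
    (hi : D i < 0) : ∃ j, j ≠ i ∧ D j < 0 := by
  by_contra! hcon
  rw [det_diagonal, ← Finset.mul_prod_erase _ _ (Finset.mem_univ i)] at hD
  have := Finset.prod_nonneg (s := Finset.univ.erase i) fun k hk =>
    hcon k (Finset.ne_of_mem_erase hk)
  nlinarith

theorem card_neg_flip_pair_lt {D : n → ℝ} {i j : n} (hi : D i < 0) (hj : D j < 0) :
    (Finset.univ.filter fun k => (if k = i ∨ k = j then -1 else 1) * D k < 0).card <
      (Finset.univ.filter fun k => D k < 0).card := by
  refine Finset.card_lt_card ⟨fun k hk => ?_, fun hsub => ?_⟩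
  · simp only [Finset.mem_filter, Finset.mem_univ, true_and] at hk ⊢
    split_ifs at hk with hk'
    · rcases hk' with rfl | rfl <;> linarith
    · linarith
  · have := hsub (Finset.mem_filter.2 ⟨Finset.mem_univ i, hi⟩)
    simp only [Finset.mem_filter, Finset.mem_univ, true_and, true_or, if_true] at this
    linarith

theorem joinedIn_det_pos_one_diagonal {D : n → ℝ} (hD : 0 < (diagonal D).det) :
    JoinedIn {M : Matrix n n ℝ | 0 < M.det} 1 (diagonal D) := by
  induction hk : (Finset.univ.filter fun i => D i < 0).card using Nat.strong_induction_on
    generalizing D with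
  | _ k ih =>
  by_cases hneg : ∃ i, D i < 0
  · obtain ⟨i, hi⟩ := hneg
    obtain ⟨j, hji, hj⟩ := exists_ne_neg_of_det_diagonal_pos hD hi
    set σ : n → ℝ := fun k => if k = j ∨ k = i then -1 else 1
    have hσ := joinedIn_det_pos_one_diagonal_neg_pair hji
    have hsplit : diagonal D = diagonal σ * diagonal (σ * D) := by
      rw [diagonal_mul_diagonal]
      congr 1
      ext k
      by_cases hk : k = j ∨ k = i <;> simp [σ, hk]
    rw [hsplit, det_mul] at hD
    rw [hsplit, ← one_mul 1]
    exact joinedIn_det_pos_mul hσ (ih _ (hk ▸ card_neg_flip_pair_lt hj hi)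
      (pos_of_mul_pos_right hD hσ.target_mem.le) rfl)
  · refine joinedIn_det_pos_one_diagonal_of_pos fun i =>
      (not_lt.1 (not_exists.1 hneg i)).lt_of_ne' ?_
    rw [det_diagonal] at hD
    exact Finset.prod_ne_zero_iff.1 hD.ne' i (Finset.mem_univ i)

theorem isPathConnected_det_pos : IsPathConnected {M : Matrix n n ℝ | 0 < M.det} :=
  ⟨1, by simp, fun M hM => diagonal_transvection_induction (fun A => JoinedIn _ 1 A) M
    (fun D hD => joinedIn_det_pos_one_diagonal (hD ▸ hM))
    (fun t => joinedIn_det_pos_one_transvection t.hij t.c)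
    (fun A B hA hB => by simpa only [mul_one] using joinedIn_det_pos_mul hA hB)⟩

end Matrix

theorem IsPathConnected.exists_curve_through_family {X : Type*} [TopologicalSpace X]
    {s : Set X} (hs : IsPathConnected s) {L : ℕ} (p : Fin L → X) (hp : ∀ i, p i ∈ s) :
    ∃ (f : ℝ → X) (τ : Fin L → ℝ),
      Continuous f ∧ IsCompact (range f) ∧ range f ⊆ s ∧ ∀ i, f (τ i) = p i := by
  cases L with
  | zero =>
    obtain ⟨x, hx⟩ := hs.nonempty
    exact ⟨fun _ => x, Fin.elim0, continuous_const, by rw [range_const]; exact isCompact_singleton,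
      range_subset_iff.2 fun _ => hx, fun i => i.elim0⟩
  | succ m =>
    obtain ⟨γ, τ, hγs, hγτ⟩ := hs.exists_path_through_family' p hp
    refine ⟨γ.extend, fun i => τ i, γ.continuous_extend, ?_, ?_, fun i => ?_⟩
    · rw [γ.extend_range]; exact isCompact_range γ.continuous
    · rw [γ.extend_range]; exact range_subset_iff.2 hγs
    · rw [γ.extend_extends', hγτ]

theorem Fin.exists_mem_Ico_castSucc_succ {α : Type*} [LinearOrder α] {s : α} :
    ∀ {L : ℕ} (t : Fin (L + 1) → α), s ∈ Ico (t 0) (t (Fin.last L)) →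
      ∃ l : Fin L, s ∈ Ico (t l.castSucc) (t l.succ)
  | 0, t, hs => ((hs.1.trans_lt hs.2).ne rfl).elim
  | L + 1, t, hs => by
    by_cases hlt : s < t (Fin.last L).castSucc
    · obtain ⟨l, hl⟩ := Fin.exists_mem_Ico_castSucc_succ (t ∘ Fin.castSucc) ⟨hs.1, hlt⟩
      exact ⟨l.castSucc, by rw [Fin.succ_castSucc]; exact hl⟩
    · exact ⟨Fin.last L, not_lt.1 hlt, by simpa using hs.2⟩

noncomputable def ramp (δ x : ℝ) : ℝ := min 1 (max 0 (x / δ + 1))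

theorem continuous_ramp (δ : ℝ) : Continuous (ramp δ) := by
  unfold ramp
  fun_prop

theorem ramp_of_le_neg {δ x : ℝ} (hδ : 0 < δ) (hx : x ≤ -δ) : ramp δ x = 0 := by
  have : x / δ + 1 ≤ 0 := by
    rw [div_add_one hδ.ne', div_nonpos_iff]
    right
    constructor <;> linarith
  simp [ramp, max_eq_left this]

theorem ramp_of_nonneg {δ x : ℝ} (hδ : 0 < δ) (hx : 0 ≤ x) : ramp δ x = 1 := by
  have : 1 ≤ x / δ + 1 := by linarith [div_nonneg hx hδ.le]
  simp [ramp, this]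

/-- Each bracket is a continuous stand-in for the indicator of `[t l.castSucc, t l.succ)`. -/
noncomputable def smoothStep {L : ℕ} (t : Fin (L + 1) → ℝ) (v : Fin L → ℝ) (δ s : ℝ) : ℝ :=
  ∑ l, v l * (ramp δ (s - t l.castSucc) - ramp δ (s - t l.succ))

theorem continuous_smoothStep {L : ℕ} (t : Fin (L + 1) → ℝ) (v : Fin L → ℝ) (δ : ℝ) :
    Continuous (smoothStep t v δ) := by
  unfold smoothStep
  have := continuous_ramp δ
  fun_prop

theorem smoothStep_eq {L : ℕ} {t : Fin (L + 1) → ℝ} (ht : Monotone t) (v : Fin L → ℝ)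
    {δ s : ℝ} (hδ : 0 < δ) {l : Fin L} (hs : s ∈ Icc (t l.castSucc) (t l.succ - δ)) :
    smoothStep t v δ s = v l := by
  rw [smoothStep, Finset.sum_eq_single l]
  · rw [ramp_of_nonneg hδ (by linarith [hs.1]), ramp_of_le_neg hδ (by linarith [hs.2])]
    ring
  · intro k _ hkl
    rcases hkl.lt_or_gt with hkl | hkl
    · have hk : t k.succ ≤ t l.castSucc := ht (Fin.succ_le_castSucc_iff.2 hkl)
      rw [ramp_of_nonneg hδ (by linarith [ht (Fin.castSucc_le_succ k), hs.1]),
        ramp_of_nonneg hδ (by linarith [hs.1])]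
      ring
    · have hk : t l.succ ≤ t k.castSucc := ht (Fin.succ_le_castSucc_iff.2 hkl)
      rw [ramp_of_le_neg hδ (by linarith [hs.2]),
        ramp_of_le_neg hδ (by linarith [hs.2, ht (Fin.castSucc_le_succ k)])]
      ring
  · simp

theorem volume_real_inter_iUnion_Ioo_le {ι : Type*} [Fintype ι] (s : Set ℝ) (a : ι → ℝ) {δ : ℝ}
    (hδ : 0 ≤ δ) : volume.real (s ∩ ⋃ i, Ioo (a i - δ) (a i)) ≤ Fintype.card ι * δ := by
  have hfin : volume (⋃ i, Ioo (a i - δ) (a i)) ≠ ⊤ := ((measure_iUnion_fintype_le _ _).trans_lt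
    (ENNReal.sum_lt_top.2 fun _ _ => measure_Ioo_lt_top)).ne
  refine (measureReal_mono inter_subset_right hfin).trans
    ((measureReal_iUnion_fintype_le _).trans ?_)
  simp [Real.volume_real_Ioo, hδ]

theorem setIntegral_le_mul_measureReal_of_eq_zero_off {X : Type*} [MeasurableSpace X]
    {μ : Measure X} {f : X → ℝ} {s E : Set X} (hs : MeasurableSet s) (hμs : μ s ≠ ⊤) {M : ℝ}
    (hf0 : ∀ x ∈ s, 0 ≤ f x) (hfM : ∀ x ∈ s, f x ≤ M) (hfE : ∀ x ∈ s \ E, f x = 0) :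
    ∫ x in s, f x ∂μ ≤ M * μ.real (s ∩ E) := by
  rw [setIntegral_eq_of_subset_of_forall_sdiff_eq_zero hs inter_subset_left
    fun x hx => hfE x ⟨hx.1, fun hxE => hx.2 ⟨hx.1, hxE⟩⟩]
  refine (Real.le_norm_self _).trans (norm_setIntegral_le_of_norm_le_const
    ((measure_mono inter_subset_left).trans_lt hμs.lt_top) fun x hx => ?_)
  rw [Real.norm_eq_abs, abs_of_nonneg (hf0 x hx.1)]
  exact hfM x hx.1

theorem setIntegral_rpow_frobNorm_sub_le {X : Type*} [MeasurableSpace X] {μ : Measure X}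
    {n : ℕ} {f g : X → Matrix (Fin n) (Fin n) ℝ} {s E : Set X} (hs : MeasurableSet s)
    (hμs : μ s ≠ ⊤) {C p : ℝ} (hp : 0 < p) (hf : ∀ x ∈ s, frobNorm (f x) ≤ C)
    (hg : ∀ x ∈ s, frobNorm (g x) ≤ C) (hfg : ∀ x ∈ s \ E, f x = g x) :
    ∫ x in s, frobNorm (f x - g x) ^ p ∂μ ≤ (2 * C) ^ p * μ.real (s ∩ E) := by
  refine setIntegral_le_mul_measureReal_of_eq_zero_off hs hμs
    (fun x _ => Real.rpow_nonneg (frobNorm_nonneg _) p) (fun x hx => ?_) (fun x hx => ?_)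
  · refine Real.rpow_le_rpow (frobNorm_nonneg _) ?_ hp.le
    linarith [frobNorm_sub_le (f x) (g x), hf x hx, hg x hx]
  · rw [hfg x hx, sub_self, frobNorm_zero, Real.zero_rpow hp.ne']

theorem stmt_3_general (n : ℕ) (p T : ℝ) (hp : 1 ≤ p)
    (L : ℕ) (t : Fin (L + 1) → ℝ)
    (ht0 : t 0 = 0) (htL : t (Fin.last L) = T) (hmono : StrictMono t)
    (Pm : Fin L → Matrix (Fin n) (Fin n) ℝ) (hdet : ∀ l, 0 < (Pm l).det)
    (P : ℝ → Matrix (Fin n) (Fin n) ℝ)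
    (hP : ∀ l : Fin L, ∀ s ∈ Set.Ico (t l.castSucc) (t l.succ), P s = Pm l) :
    ∃ C > 0, ∀ ε > 0, ∃ Pε : ℝ → Matrix (Fin n) (Fin n) ℝ,
      ContinuousOn Pε (Set.Icc 0 T) ∧
      (∫ s in Set.Ioo (0 : ℝ) T, (frobNorm (Pε s - P s)) ^ p) ^ (1 / p) < ε ∧
      ∀ s ∈ Set.Icc (0 : ℝ) T, 0 < (Pε s).det ∧ frobNorm (Pε s) ≤ C := by
  have hp0 : 0 < p := by linarith
  obtain ⟨Γ, τ, hΓ, hΓK, hΓS, hΓτ⟩ :=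
    isPathConnected_det_pos.exists_curve_through_family Pm hdet
  obtain ⟨C, hC, hΓC⟩ := hΓK.exists_pos_frobNorm_le
  have hstep : ∀ s ∈ Ioo 0 T, ∃ l, s ∈ Ico (t l.castSucc) (t l.succ) ∧ P s = Γ (τ l) := by
    intro s hs
    obtain ⟨l, hl⟩ := Fin.exists_mem_Ico_castSucc_succ t (s := s) (by
      rw [ht0, htL]; exact ⟨hs.1.le, hs.2⟩)
    exact ⟨l, hl, by rw [hP l s hl, hΓτ]⟩
  refine ⟨C, hC, fun ε hε => ?_⟩
  obtain ⟨δ, hδ, hδε⟩ := exists_pos_mul_lt (Real.rpow_pos_of_pos hε p) (L * (2 * C) ^ p)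
  set E := ⋃ l : Fin L, Ioo (t l.succ - δ) (t l.succ)
  refine ⟨fun s => Γ (smoothStep t τ δ s), (hΓ.comp (continuous_smoothStep t τ δ)).continuousOn,
    ?_, fun s _ => ⟨hΓS ⟨_, rfl⟩, hΓC _ ⟨_, rfl⟩⟩⟩
  rw [one_div, Real.rpow_inv_lt_iff_of_pos
    (integral_nonneg fun s => Real.rpow_nonneg (frobNorm_nonneg _) p) hε.le hp0]
  calc _ ≤ (2 * C) ^ p * volume.real (Ioo 0 T ∩ E) :=
        setIntegral_rpow_frobNorm_sub_le measurableSet_Ioo measure_Ioo_lt_top.ne hp0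
          (fun s _ => hΓC _ ⟨_, rfl⟩) (fun s hs => ?_) (fun s hs => ?_)
    _ ≤ (2 * C) ^ p * (L * δ) := by
        gcongr
        simpa using volume_real_inter_iUnion_Ioo_le (Ioo 0 T) (fun l : Fin L => t l.succ) hδ.le
    _ < ε ^ p := by linarith
  · obtain ⟨l, -, hPs⟩ := hstep s hs
    exact hPs ▸ hΓC _ ⟨_, rfl⟩
  · obtain ⟨l, hl, hPs⟩ := hstep s hs.1
    have hsl : s ≤ t l.succ - δ := not_lt.1 fun h => hs.2 (mem_iUnion.2 ⟨l, h, hl.2⟩)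
    rw [smoothStep_eq hmono.monotone τ hδ ⟨hl.1, hsl⟩, hPs]

/-- Lemma: continuous approximation of a piecewise-constant,
positive-determinant matrix path in Lᵖ, with uniform bound and positive determinant. -/
theorem stmt_3 (n : ℕ) (p T : ℝ) (hp : 1 ≤ p) (hT : 0 < T)
    (L : ℕ) (hL : 0 < L) (t : Fin (L + 1) → ℝ)
    (ht0 : t 0 = 0) (htL : t (Fin.last L) = T) (hmono : StrictMono t)
    (Pm : Fin L → Matrix (Fin n) (Fin n) ℝ) (hdet : ∀ l, 0 < (Pm l).det)
    (P : ℝ → Matrix (Fin n) (Fin n) ℝ)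
    (hP : ∀ l : Fin L, ∀ s ∈ Set.Ico (t l.castSucc) (t l.succ), P s = Pm l) :
    ∃ C > 0, ∀ ε > 0, ∃ Pε : ℝ → Matrix (Fin n) (Fin n) ℝ,
      ContinuousOn Pε (Set.Icc 0 T) ∧
      (∫ s in Set.Ioo (0 : ℝ) T, (frobNorm (Pε s - P s)) ^ p) ^ (1 / p) < ε ∧
      ∀ s ∈ Set.Icc (0 : ℝ) T, 0 < (Pε s).det ∧ frobNorm (Pε s) ≤ C :=
  stmt_3_general n p T hp L t ht0 htL hmono Pm hdet P hP
end

section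
/- Let m ≤ n be positive integers, D ⊂ ℝ^n a compact set, and A ∈ ℝ^{m×n} with rank(A) = m. Suppose σ : ℝ → ℝ is locally Lipschitz continuous and has the universal approximation property on D. Then for every continuous F : D → ℝ^m and every η > 0 there exist L ∈ ℕ and vectors α^(l) ∈ ℝ^m, matrices β^(l) ∈ ℝ^{n×n}, and vectors γ^(l) ∈ ℝ^n (l = 1,…,L) such that for every ξ ∈ D, the sequences defined by x^(0) = ξ, y^(0) = 0, x^(l) = x^(l−1) + β^(l)x^(l−1) + γ^(l), y^(l) = y^(l−1) + α^(l) ⊙ 𝛔(Ax^(l)) for l = 1,…,L satisfy |y^(L) − F(ξ)| < η. -/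
/-- Euclidean norm of a vector in ℝ^k. -/
noncomputable def euclNorm {k : ℕ} (v : Fin k → ℝ) : ℝ :=
  Real.sqrt (∑ i, (v i) ^ 2)

/-- σ is locally Lipschitz continuous. -/
def LocLip (σ : ℝ → ℝ) : Prop :=
  ∀ R > 0, ∃ LR > 0, ∀ s₁ ∈ Set.Icc (-R) R, ∀ s₂ ∈ Set.Icc (-R) R,
    |σ s₁ - σ s₂| ≤ LR * |s₁ - s₂|

/-- σ has the universal approximation property on a compact set D ⊂ ℝⁿ. -/
def HasUAP {n : ℕ} (σ : ℝ → ℝ) (D : Set (Fin n → ℝ)) : Prop :=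
  ∀ F : (Fin n → ℝ) → ℝ, ContinuousOn F D → ∀ η > 0,
    ∃ (L : ℕ) (a d : Fin L → ℝ) (c : Fin L → Fin n → ℝ),
      ∀ ξ ∈ D, |(∑ l, a l * σ ((∑ i, c l i * ξ i) + d l)) - F ξ| < η

lemma exists_mat (n : ℕ) (a c : Fin n → ℝ) (ha : a ≠ 0) (hc : c ≠ 0) :
    ∃ S : Matrix (Fin n) (Fin n) ℝ, IsUnit S.det ∧ Matrix.vecMul a S = c := by
  obtain ⟨v, hv⟩ := SeparatingDual.exists_continuousLinearEquiv_apply_eq (R := ℝ) ha hc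
  set f : (Fin n → ℝ) →ₗ[ℝ] (Fin n → ℝ) := v.toLinearEquiv.toLinearMap
  refine ⟨Matrix.transpose (LinearMap.toMatrix' f), ?_, ?_⟩
  · rw [Matrix.det_transpose, LinearMap.det_toMatrix']
    exact v.toLinearEquiv.isUnit_det'
  · rw [Matrix.vecMul_transpose]
    show Matrix.toLin' (LinearMap.toMatrix' f) a = c
    rw [Matrix.toLin'_toMatrix']
    exact hv

lemma rows_ne_zero {m n : ℕ} (A : Matrix (Fin m) (Fin n) ℝ) (hA : A.rank = m) (i : Fin m) :
    A i ≠ 0 := by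
  have hr : Module.finrank ℝ (LinearMap.range A.mulVecLin) = m := hA
  have htop : LinearMap.range A.mulVecLin = ⊤ := by
    apply Submodule.eq_top_of_finrank_eq
    rw [hr, Module.finrank_fintype_fun_eq_card, Fintype.card_fin]
  have hsurj : ∃ v, A.mulVec v = Pi.single i 1 := by
    have : (Pi.single i 1 : Fin m → ℝ) ∈ LinearMap.range A.mulVecLin := htop ▸ Submodule.mem_top
    obtain ⟨v, hv⟩ := this
    exact ⟨v, hv⟩
  obtain ⟨v, hv⟩ := hsurj
  intro hcon
  have h1 : A.mulVec v i = 1 := by rw [hv, Pi.single_eq_same]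
  rw [Matrix.mulVec, dotProduct] at h1
  simp only [hcon] at h1
  simp at h1

lemma sum_pad {L' Lmax : ℕ} (h : L' ≤ Lmax) (f : Fin L' → ℝ) :
    (∑ l : Fin Lmax, if hl : (l : ℕ) < L' then f ⟨l, hl⟩ else 0) = ∑ l, f l := by
  set g : ℕ → ℝ := fun l => if hl : l < L' then f ⟨l, hl⟩ else 0 with hg
  have h1 : (∑ l : Fin Lmax, if hl : (l : ℕ) < L' then f ⟨l, hl⟩ else 0)
      = ∑ l ∈ Finset.range Lmax, g l := Fin.sum_univ_eq_sum_range g Lmax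
  have h2 : (∑ l, f l) = ∑ l ∈ Finset.range L', g l := by
    rw [← Fin.sum_univ_eq_sum_range g L']
    apply Finset.sum_congr rfl
    intro l _
    rw [hg]
    simp only [Fin.is_lt, dif_pos, Fin.eta]
  rw [h1, h2]
  symm
  apply Finset.sum_subset (Finset.range_subset_range.2 h)
  intro x _ hx
  rw [Finset.mem_range, not_lt] at hx
  rw [hg]
  simp only [dif_neg (not_lt.2 hx)]

lemma uap_nonzero {n : ℕ} (hn : 0 < n) (D : Set (Fin n → ℝ)) (hD : IsCompact D)
    (σ : ℝ → ℝ) (hσ : LocLip σ) (huap : HasUAP σ D)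
    (G : (Fin n → ℝ) → ℝ) (hG : ContinuousOn G D) (ε : ℝ) (hε : 0 < ε) :
    ∃ (L : ℕ) (a d : Fin L → ℝ) (c : Fin L → Fin n → ℝ), (∀ l, c l ≠ 0) ∧
      ∀ ξ ∈ D, |(∑ l, a l * σ ((∑ i, c l i * ξ i) + d l)) - G ξ| < ε := by
  obtain ⟨L, a, d, c, hc⟩ := huap G hG (ε/2) (by positivity)
  set i0 : Fin n := ⟨0, hn⟩
  obtain ⟨R, hR⟩ := hD.exists_bound_of_continuousOn (f := fun ξ : Fin n → ℝ => ξ i0)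
    ((continuous_apply i0).continuousOn)
  set R0 : ℝ := max R 0 + 1 with hR0def
  have hR0pos : 0 < R0 := by positivity
  have hxb : ∀ ξ ∈ D, |ξ i0| ≤ R0 := by
    intro ξ hξ
    have h1 := hR ξ hξ
    simp only [Real.norm_eq_abs] at h1
    have h2 : R ≤ max R 0 := le_max_left _ _
    have h3 : (0:ℝ) ≤ max R 0 := le_max_right _ _
    linarith
  set Rd : ℝ := (∑ l, |d l|) + 1 with hRddef
  have hRdpos : 0 < Rd := by positivity
  obtain ⟨K, hK, hKlip⟩ := hσ Rd hRdpos
  set Sa : ℝ := (∑ l, |a l|) + 1 with hSadef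
  have hSa1 : (∑ l, |a l|) ≤ Sa - 1 := by rw [hSadef]; linarith
  have hSapos : 0 < Sa := by positivity
  set δ : ℝ := min (1 / R0) (ε / (2 * (K * R0 * Sa))) with hδdef
  have hδpos : 0 < δ := lt_min (by positivity) (by positivity)
  set c' : Fin L → Fin n → ℝ := fun l => if c l = 0 then Pi.single i0 δ else c l with hc'def
  refine ⟨L, a, d, c', fun l => ?_, ?_⟩
  · by_cases h : c l = 0
    · have hcl : c' l = Pi.single i0 δ := by simp only [hc'def]; exact if_pos h
      rw [hcl]
      intro hcon
      have h2 : (Pi.single i0 δ : Fin n → ℝ) i0 = 0 := by rw [hcon]; rfl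
      rw [Pi.single_eq_same] at h2
      exact hδpos.ne' h2
    · have hcl : c' l = c l := by simp only [hc'def]; exact if_neg h
      rw [hcl]; exact h
  · intro ξ hξ
    have hterm : ∀ l, |a l * σ ((∑ i, c' l i * ξ i) + d l) - a l * σ ((∑ i, c l i * ξ i) + d l)|
        ≤ |a l| * (K * (δ * R0)) := by
      intro l
      by_cases h : c l = 0
      · have hcl : c' l = Pi.single i0 δ := by simp only [hc'def]; exact if_pos h
        have hcs : (∑ i, c' l i * ξ i) = δ * ξ i0 := by
          rw [hcl]
          rw [Fintype.sum_eq_single i0]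
          · rw [Pi.single_eq_same]
          · intro j hj
            rw [Pi.single_eq_of_ne hj, zero_mul]
        have hzs : (∑ i, c l i * ξ i) = 0 := by simp [h]
        rw [hcs, hzs, ← mul_sub, abs_mul]
        apply mul_le_mul_of_nonneg_left _ (abs_nonneg _)
        have hdl : |d l| ≤ Rd - 1 := by
          rw [hRddef, add_sub_cancel_right]
          exact Finset.single_le_sum (f := fun l => |d l|) (fun _ _ => abs_nonneg _)
            (Finset.mem_univ l)
        have hδR : δ * |ξ i0| ≤ 1 := by
          have h1 : δ * |ξ i0| ≤ (1/R0) * R0 :=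
            mul_le_mul (min_le_left _ _) (hxb ξ hξ) (abs_nonneg _) (by positivity)
          rwa [one_div_mul_cancel hR0pos.ne'] at h1
        have hδR2 : δ * |ξ i0| ≤ δ * R0 := mul_le_mul_of_nonneg_left (hxb ξ hξ) hδpos.le
        have habs : |δ * ξ i0| = δ * |ξ i0| := by rw [abs_mul, abs_of_pos hδpos]
        have hmem1 : δ * ξ i0 + d l ∈ Set.Icc (-Rd) Rd := by
          rw [Set.mem_Icc, ← abs_le]
          have := abs_add_le (δ * ξ i0) (d l)
          rw [habs] at this
          linarith
        have hmem2 : (0:ℝ) + d l ∈ Set.Icc (-Rd) Rd := by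
          rw [Set.mem_Icc, ← abs_le, zero_add]
          linarith
        have hlip := hKlip _ hmem1 _ hmem2
        have he : δ * ξ i0 + d l - (0 + d l) = δ * ξ i0 := by ring
        rw [he, habs] at hlip
        calc |σ (δ * ξ i0 + d l) - σ (0 + d l)| ≤ K * (δ * |ξ i0|) := hlip
          _ ≤ K * (δ * R0) := mul_le_mul_of_nonneg_left hδR2 hK.le
      · have hcl : c' l = c l := by simp only [hc'def]; exact if_neg h
        rw [hcl, sub_self, abs_zero]
        positivity
    have hδ2 : δ ≤ ε / (2 * (K * R0 * Sa)) := min_le_right _ _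
    have hsum : |(∑ l, a l * σ ((∑ i, c' l i * ξ i) + d l))
        - (∑ l, a l * σ ((∑ i, c l i * ξ i) + d l))| ≤ ε / 2 := by
      rw [← Finset.sum_sub_distrib]
      have h1 := Finset.abs_sum_le_sum_abs
        (fun l => a l * σ ((∑ i, c' l i * ξ i) + d l) - a l * σ ((∑ i, c l i * ξ i) + d l))
        Finset.univ
      have h2 : (∑ l, |a l * σ ((∑ i, c' l i * ξ i) + d l) - a l * σ ((∑ i, c l i * ξ i) + d l)|)
          ≤ ∑ l, |a l| * (K * (δ * R0)) := Finset.sum_le_sum (fun l _ => hterm l)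
      have h3 : (∑ l, |a l| * (K * (δ * R0))) = (∑ l, |a l|) * (K * (δ * R0)) := by
        rw [← Finset.sum_mul]
      have h4 : (∑ l, |a l|) * (K * (δ * R0)) ≤ Sa * (K * (δ * R0)) := by
        apply mul_le_mul_of_nonneg_right _ (by positivity)
        linarith
      have h5 : Sa * (K * (δ * R0)) ≤ Sa * (K * ((ε / (2 * (K * R0 * Sa))) * R0)) := by
        apply mul_le_mul_of_nonneg_left _ hSapos.le
        apply mul_le_mul_of_nonneg_left _ hK.le
        exact mul_le_mul_of_nonneg_right hδ2 hR0pos.le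
      have h6 : Sa * (K * ((ε / (2 * (K * R0 * Sa))) * R0)) = ε / 2 := by
        field_simp
      exact h1.trans (h2.trans (h3.le.trans (h4.trans (h5.trans h6.le))))
    have h7 := hc ξ hξ
    have h8 := abs_sub_le (∑ l, a l * σ ((∑ i, c' l i * ξ i) + d l))
      (∑ l, a l * σ ((∑ i, c l i * ξ i) + d l)) (G ξ)
    linarith

/-- Theorem: universal approximation property for ResNet. -/
theorem stmt_6 (m n : ℕ) (hm : 0 < m) (hmn : m ≤ n)
    (D : Set (Fin n → ℝ)) (hD : IsCompact D)
    (A : Matrix (Fin m) (Fin n) ℝ) (hA : A.rank = m)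
    (σ : ℝ → ℝ) (hσ : LocLip σ) (huap : HasUAP σ D)
    (F : (Fin n → ℝ) → Fin m → ℝ) (hF : ContinuousOn F D)
    (η : ℝ) (hη : 0 < η) :
    ∃ (L : ℕ) (α : Fin L → Fin m → ℝ) (β : Fin L → Matrix (Fin n) (Fin n) ℝ)
      (γ : Fin L → Fin n → ℝ),
      ∀ ξ ∈ D, ∀ (x : Fin (L + 1) → Fin n → ℝ) (y : Fin (L + 1) → Fin m → ℝ),
        x 0 = ξ → y 0 = 0 →
        (∀ l : Fin L, x l.succ = x l.castSucc + (β l).mulVec (x l.castSucc) + γ l) →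
        (∀ l : Fin L, ∀ i, y l.succ i = y l.castSucc i + α l i * σ (A.mulVec (x l.succ) i)) →
        euclNorm (y (Fin.last L) - F ξ) < η := by
  have hn : 0 < n := lt_of_lt_of_le hm hmn
  have hmR : (0:ℝ) < m := by exact_mod_cast hm
  set ε : ℝ := η / m with hεdef
  have hε : 0 < ε := div_pos hη hmR
  -- per-component networks with nonzero direction vectors
  have hcomp : ∀ i : Fin m, ∃ (L : ℕ) (a d : Fin L → ℝ) (c : Fin L → Fin n → ℝ),
      (∀ l, c l ≠ 0) ∧
      ∀ ξ ∈ D, |(∑ l, a l * σ ((∑ j, c l j * ξ j) + d l)) - F ξ i| < ε := by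
    intro i
    exact uap_nonzero hn D hD σ hσ huap (fun ξ => F ξ i)
      ((continuous_apply i).comp_continuousOn hF) ε hε
  choose Li av dv cv hcne happ using hcomp
  set LM : ℕ := Finset.univ.sup Li with hLM
  have hLle : ∀ i, Li i ≤ LM := fun i => Finset.le_sup (Finset.mem_univ i)
  set i0 : Fin n := ⟨0, hn⟩ with hi0
  -- padded networks of common length LM
  set a' : Fin m → Fin LM → ℝ :=
    fun i l => if hl : (l:ℕ) < Li i then av i ⟨l, hl⟩ else 0 with ha'
  set d' : Fin m → Fin LM → ℝ :=
    fun i l => if hl : (l:ℕ) < Li i then dv i ⟨l, hl⟩ else 0 with hd'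
  set c' : Fin m → Fin LM → Fin n → ℝ :=
    fun i l => if hl : (l:ℕ) < Li i then cv i ⟨l, hl⟩ else Pi.single i0 1 with hc'
  have hc'ne : ∀ i l, c' i l ≠ 0 := by
    intro i l
    rw [hc']
    dsimp only
    split_ifs with hl
    · exact hcne i ⟨l, hl⟩
    · intro hcon
      have h2 : (Pi.single i0 1 : Fin n → ℝ) i0 = 0 := by rw [hcon]; rfl
      rw [Pi.single_eq_same] at h2
      exact one_ne_zero h2
  have happ' : ∀ i : Fin m, ∀ ξ ∈ D,
      |(∑ l : Fin LM, a' i l * σ ((∑ j, c' i l j * ξ j) + d' i l)) - F ξ i| < ε := by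
    intro i ξ hξ
    have he : (∑ l : Fin LM, a' i l * σ ((∑ j, c' i l j * ξ j) + d' i l))
        = ∑ l : Fin (Li i), av i l * σ ((∑ j, cv i l j * ξ j) + dv i l) := by
      rw [← sum_pad (hLle i) (fun l => av i l * σ ((∑ j, cv i l j * ξ j) + dv i l))]
      apply Finset.sum_congr rfl
      intro l _
      by_cases hl : (l:ℕ) < Li i
      · simp only [ha', hd', hc', dif_pos hl]
      · simp only [ha', hd', hc', dif_neg hl, zero_mul]
    rw [he]
    exact happ i ξ hξ
  -- layers
  set p : Fin (m * LM) → Fin m × Fin LM := fun s => finProdFinEquiv.symm s with hp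
  have harow : ∀ i, A i ≠ 0 := rows_ne_zero A hA
  have hS : ∀ s : Fin (m * LM), ∃ S : Matrix (Fin n) (Fin n) ℝ,
      IsUnit S.det ∧ Matrix.vecMul (A (p s).1) S = c' (p s).1 (p s).2 :=
    fun s => exists_mat n _ _ (harow _) (hc'ne _ _)
  choose S hSdet hSvec using hS
  set q : Fin (m * LM) → ℝ := fun s => ∑ j, (A (p s).1 j)^2 with hqdef
  have hqpos : ∀ s, 0 < q s := by
    intro s
    rw [hqdef]
    have h1 : ∃ j, A (p s).1 j ≠ 0 := by
      by_contra hcon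
      push_neg at hcon
      exact harow (p s).1 (funext fun j => hcon j)
    obtain ⟨j, hj⟩ := h1
    apply Finset.sum_pos' (fun k _ => sq_nonneg _) ⟨j, Finset.mem_univ j, by positivity⟩
  set bv : Fin (m * LM) → (Fin n → ℝ) :=
    fun s => (d' (p s).1 (p s).2 / q s) • (A (p s).1) with hbv
  set Tm : Fin (m * LM + 1) → Matrix (Fin n) (Fin n) ℝ := Fin.cases 1 S with hTm
  set bb : Fin (m * LM + 1) → (Fin n → ℝ) := Fin.cases 0 bv with hbb
  have hTm0 : Tm 0 = 1 := by rw [hTm]; exact Fin.cases_zero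
  have hTms : ∀ s, Tm s.succ = S s := by intro s; rw [hTm]; exact Fin.cases_succ _
  have hbb0 : bb 0 = 0 := by rw [hbb]; exact Fin.cases_zero
  have hbbs : ∀ s, bb s.succ = bv s := by intro s; rw [hbb]; exact Fin.cases_succ _
  have hTdet : ∀ t, IsUnit (Tm t).det := by
    intro t
    induction t using Fin.cases with
    | zero => rw [hTm0, Matrix.det_one]; exact isUnit_one
    | succ s => rw [hTms s]; exact hSdet s
  set αf : Fin (m * LM) → Fin m → ℝ :=
    fun s => Pi.single (p s).1 (a' (p s).1 (p s).2) with hαf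
  set βf : Fin (m * LM) → Matrix (Fin n) (Fin n) ℝ :=
    fun s => Tm s.succ * (Tm s.castSucc)⁻¹ - 1 with hβf
  set γf : Fin (m * LM) → (Fin n → ℝ) :=
    fun s => bb s.succ - (Tm s.succ * (Tm s.castSucc)⁻¹).mulVec (bb s.castSucc) with hγf
  refine ⟨m * LM, αf, βf, γf, ?_⟩
  intro ξ hξ x y hx0 hy0 hxrec hyrec
  -- invariant for x
  have hxinv : ∀ t : Fin (m * LM + 1), x t = (Tm t).mulVec ξ + bb t := by
    intro t
    induction t using Fin.induction with
    | zero => rw [hx0, hTm0, hbb0, Matrix.one_mulVec, add_zero]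
    | succ s ih =>
      rw [hxrec s, ih, hβf, hγf]
      dsimp only
      have hcan : Tm s.succ * (Tm s.castSucc)⁻¹ * Tm s.castSucc = Tm s.succ := by
        rw [Matrix.mul_assoc, Matrix.nonsing_inv_mul _ (hTdet s.castSucc), Matrix.mul_one]
      have e1 : (Tm s.succ * (Tm s.castSucc)⁻¹).mulVec ((Tm s.castSucc).mulVec ξ)
          = (Tm s.succ).mulVec ξ := by rw [Matrix.mulVec_mulVec, hcan]
      rw [Matrix.sub_mulVec, Matrix.mulVec_add, Matrix.one_mulVec, e1]
      abel
  -- invariant for y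
  set gg : Fin m → ℕ → ℝ := fun i s =>
    if hs : s < m * LM then
      αf ⟨s, hs⟩ i * σ (A.mulVec (x (Fin.succ ⟨s, hs⟩)) i) else 0 with hgg
  have hyinv : ∀ t : Fin (m * LM + 1), ∀ i, y t i = ∑ s ∈ Finset.range t.val, gg i s := by
    intro t
    induction t using Fin.induction with
    | zero =>
      intro i
      rw [hy0]
      simp
    | succ s ih =>
      intro i
      have hsv : (Fin.succ s : Fin (m * LM + 1)).val = s.val + 1 := Fin.val_succ s
      have hcv : (Fin.castSucc s : Fin (m * LM + 1)).val = s.val := Fin.coe_castSucc s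
      rw [hyrec s i, ih i, hsv, hcv, Finset.sum_range_succ]
      congr 1
      rw [hgg]
      dsimp only
      rw [dif_pos s.isLt]
  have hfin : ∀ i, y (Fin.last (m * LM)) i
      = ∑ s : Fin (m * LM), αf s i * σ (A.mulVec (x s.succ) i) := by
    intro i
    rw [hyinv (Fin.last (m * LM)) i, Fin.val_last,
      ← Fin.sum_univ_eq_sum_range (gg i) (m * LM)]
    apply Finset.sum_congr rfl
    intro s _
    rw [hgg]
    dsimp only
    rw [dif_pos s.isLt]
  -- value of the sigma argument at each layer
  have hxval : ∀ s : Fin (m * LM), A.mulVec (x s.succ) (p s).1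
      = (∑ j, c' (p s).1 (p s).2 j * ξ j) + d' (p s).1 (p s).2 := by
    intro s
    rw [hxinv s.succ, hTms s, hbbs s, Matrix.mulVec_add]
    have part1 : A.mulVec ((S s).mulVec ξ) (p s).1 = ∑ j, c' (p s).1 (p s).2 j * ξ j := by
      rw [Matrix.mulVec_mulVec]
      have hrow : (A * S s) (p s).1 = Matrix.vecMul (A (p s).1) (S s) := by
        funext j
        rw [Matrix.mul_apply, Matrix.vecMul, dotProduct]
      rw [Matrix.mulVec, hrow, hSvec s, dotProduct]
    have part2 : A.mulVec (bv s) (p s).1 = d' (p s).1 (p s).2 := by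
      rw [hbv]
      dsimp only
      rw [Matrix.mulVec_smul]
      have h2 : A.mulVec (A (p s).1) (p s).1 = q s := by
        rw [Matrix.mulVec, dotProduct, hqdef]
        apply Finset.sum_congr rfl
        intro j _
        ring
      rw [Pi.smul_apply, h2, smul_eq_mul, div_mul_cancel₀ _ (hqpos s).ne']
    rw [Pi.add_apply, part1, part2]
  have hterm : ∀ (s : Fin (m * LM)) (i : Fin m), αf s i * σ (A.mulVec (x s.succ) i)
      = if i = (p s).1 then
          a' i (p s).2 * σ ((∑ j, c' i (p s).2 j * ξ j) + d' i (p s).2) else 0 := by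
    intro s i
    rw [hαf]
    dsimp only
    rw [Pi.single_apply]
    split_ifs with h
    · subst h
      rw [hxval s]
    · rw [zero_mul]
  have hysum : ∀ i, y (Fin.last (m * LM)) i
      = ∑ l : Fin LM, a' i l * σ ((∑ j, c' i l j * ξ j) + d' i l) := by
    intro i
    rw [hfin i]
    rw [Finset.sum_congr rfl (fun s _ => hterm s i)]
    rw [← Equiv.sum_comp finProdFinEquiv (fun s => if i = (p s).1 then
      a' i (p s).2 * σ ((∑ j, c' i (p s).2 j * ξ j) + d' i (p s).2) else 0)]
    have hps : ∀ z : Fin m × Fin LM, p (finProdFinEquiv z) = z := by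
      intro z
      rw [hp]
      exact Equiv.symm_apply_apply _ _
    rw [Finset.sum_congr rfl (fun z _ => by rw [hps z])]
    rw [Fintype.sum_prod_type]
    have hinner : ∀ i' : Fin m, (∑ l : Fin LM, if i = i' then
        a' i l * σ ((∑ j, c' i l j * ξ j) + d' i l) else 0)
        = if i = i' then (∑ l : Fin LM, a' i l * σ ((∑ j, c' i l j * ξ j) + d' i l)) else 0 := by
      intro i'
      split_ifs <;> simp
    rw [Finset.sum_congr rfl (fun i' _ => hinner i')]
    rw [Finset.sum_ite_eq]
    simp
  -- conclusion
  have hyF : ∀ i, |y (Fin.last (m * LM)) i - F ξ i| < ε := by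
    intro i
    rw [hysum i]
    exact happ' i ξ hξ
  have h1 : ∀ i, (y (Fin.last (m * LM)) i - F ξ i)^2 < ε^2 := by
    intro i
    have h2 := hyF i
    calc (y (Fin.last (m * LM)) i - F ξ i)^2 = |y (Fin.last (m * LM)) i - F ξ i|^2 :=
          (sq_abs _).symm
      _ < ε^2 := by
          apply pow_lt_pow_left₀ h2 (abs_nonneg _) two_ne_zero
  haveI : Nonempty (Fin m) := Fin.pos_iff_nonempty.mp hm
  have h2 : (∑ i, (y (Fin.last (m * LM)) i - F ξ i)^2) < ∑ _i : Fin m, ε^2 :=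
    Finset.sum_lt_sum_of_nonempty Finset.univ_nonempty (fun i _ => h1 i)
  have h3 : (∑ _i : Fin m, ε^2) = m * ε^2 := by
    rw [Finset.sum_const, Finset.card_univ, Fintype.card_fin, nsmul_eq_mul]
  have h4 : (m:ℝ) * ε^2 ≤ η^2 := by
    have e : (m:ℝ) * (η/m)^2 = η^2/m := by
      field_simp
    rw [hεdef, e]
    apply div_le_self (sq_nonneg η)
    exact_mod_cast hm
  rw [euclNorm]
  have h5 : (∑ i, ((y (Fin.last (m * LM)) - F ξ) i)^2)
      = ∑ i, (y (Fin.last (m * LM)) i - F ξ i)^2 := by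
    apply Finset.sum_congr rfl
    intro i _
    rw [Pi.sub_apply]
  rw [h5]
  calc Real.sqrt (∑ i, (y (Fin.last (m * LM)) i - F ξ i)^2)
      < Real.sqrt (η^2) := by
        apply Real.sqrt_lt_sqrt (Finset.sum_nonneg (fun i _ => sq_nonneg _))
        calc (∑ i, (y (Fin.last (m * LM)) i - F ξ i)^2) < ∑ _i : Fin m, ε^2 := h2
          _ = m * ε^2 := h3
          _ ≤ η^2 := h4
    _ = η := Real.sqrt_sq hη.le
end

section
/- Let n, m, N, L ∈ ℕ, P ∈ ℝ^{m×N}, Q ∈ ℝ^{N×n}, and for l = 0,…,L−1 let r_l ∈ ℕ and f^(l) : ℝ^N × ℝ^{r_l} → ℝ^N be continuously differentiable. Let I be a finite nonempty index set, ξ^(k) ∈ ℝ^n and F(ξ^(k)) ∈ ℝ^m for k ∈ I. For design parameters ω^(l) ∈ ℝ^{r_l}, define for each k ∈ I the sequence x^(0,k) = Qξ^(k), x^(l+1,k) = x^(l,k) + f^(l)(x^(l,k), ω^(l)) for l = 0,…,L−1, and the loss e(ω) = (1/(2|I|)) Σ_{k∈I} |P x^(L,k) − F(ξ^(k))|². Define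 λ^(L,k) = (1/|I|) P^⊤(P x^(L,k) − F(ξ^(k))) and, backwards for l = L−1,…,0, λ^(l,k) = λ^(l+1,k) + ∇_x f^(l)⊤(x^(l,k), ω^(l)) λ^(l+1,k). Then for each l = 0,…,L−1, the gradient of e with respect to ω^(l) is ∇_{ω^(l)} e(ω) = Σ_{k∈I} ∇_ω f^(l)⊤(x^(l,k), ω^(l)) λ^(l+1,k). -/
/-!
Perturbing `ω⁽ˡ⁾` leaves the states `x⁽ᵗ⁾`, `t ≤ l`, unchanged, and for `t > l` their derivatives
`δx⁽ᵗ⁾` with respect to `ω⁽ˡ⁾` follow the linearised forward recursion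
`δx⁽ˡ⁺¹⁾ = ∇_ω f⁽ˡ⁾`, `δx⁽ᵗ⁺¹⁾ = δx⁽ᵗ⁾ + ∇_x f⁽ᵗ⁾ δx⁽ᵗ⁾`. The backward recursion for `λ` is the
adjoint of this one, so `⟨λ⁽ᵗ⁾, δx⁽ᵗ⁾ v⟩` does not depend on `t`. At `t = L` it is the
directional derivative of the loss of one sample, at `t = l + 1` it is `⟨λ⁽ˡ⁺¹⁾, ∇_ω f⁽ˡ⁾ v⟩`.
-/

/-- The ResNet forward recursion x⁽⁰⁾ = Qξ, x⁽ˡ⁺¹⁾ = x⁽ˡ⁾ + f⁽ˡ⁾(x⁽ˡ⁾, ω⁽ˡ⁾). -/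
noncomputable def resX {N n L : ℕ} {r : Fin L → ℕ}
    (f : ∀ l : Fin L, (Fin N → ℝ) → (Fin (r l) → ℝ) → (Fin N → ℝ))
    (Q : Matrix (Fin N) (Fin n) ℝ) (ω : ∀ l : Fin L, Fin (r l) → ℝ)
    (ξ : Fin n → ℝ) : ℕ → Fin N → ℝ
  | 0 => Q.mulVec ξ
  | l + 1 =>
    if h : l < L then
      resX f Q ω ξ l + f ⟨l, h⟩ (resX f Q ω ξ l) (ω ⟨l, h⟩)
    else resX f Q ω ξ l

open Matrix Function

theorem dotProduct_eq_dotProduct_add_of_adjoint {R ι : Type*} [CommSemiring R] [Fintype ι]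
    [DecidableEq ι] (J : (ι → R) →ₗ[R] ι → R) {μ ν : ι → R}
    (h : ∀ j, ν j = μ j + ∑ i, J (Pi.single j 1) i * μ i) (u : ι → R) :
    ν ⬝ᵥ u = μ ⬝ᵥ (u + J u) := by
  have hν : ν = μ + μ ᵥ* LinearMap.toMatrix' J := by
    ext j
    simp [h, vecMul, dotProduct, mul_comm]
  rw [hν, add_dotProduct, dotProduct_add, ← dotProduct_mulVec, LinearMap.toMatrix'_mulVec]

section Calculus

variable {E F G : Type*} [NormedAddCommGroup E] [NormedSpace ℝ E] [NormedAddCommGroup F]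
  [NormedSpace ℝ F] [NormedAddCommGroup G] [NormedSpace ℝ G]

theorem Differentiable.differentiableAt_left {g : E → F → G}
    (h : Differentiable ℝ fun p : E × F => g p.1 p.2) (x : E) (y : F) :
    DifferentiableAt ℝ (fun z => g z y) x :=
  (h (x, y)).comp (f := fun z => (z, y)) x (differentiableAt_id.prodMk (differentiableAt_const y))

theorem Differentiable.differentiableAt_right {g : E → F → G}
    (h : Differentiable ℝ fun p : E × F => g p.1 p.2) (x : E) (y : F) :
    DifferentiableAt ℝ (g x) y :=
  (h (x, y)).comp (f := fun z => (x, z)) y ((differentiableAt_const x).prodMk differentiableAt_id)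

theorem HasFDerivAt.matrix_mulVec {m n : Type*} [Fintype m] [Fintype n] (P : Matrix m n ℝ)
    {X : E → n → ℝ} {D : E →L[ℝ] n → ℝ} {x : E} (h : HasFDerivAt X D x) :
    HasFDerivAt (fun w => P *ᵥ X w) ((LinearMap.toContinuousLinearMap P.mulVecLin).comp D) x :=
  (LinearMap.toContinuousLinearMap P.mulVecLin).hasFDerivAt.comp x h

theorem HasFDerivAt.sum_sq {ι : Type*} [Fintype ι] {y : E → ι → ℝ} {y' : E →L[ℝ] ι → ℝ}
    {x : E} (h : HasFDerivAt y y' x) :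
    HasFDerivAt (fun w => ∑ i, y w i ^ 2)
      (∑ i, (2 * y x i) • (ContinuousLinearMap.proj i).comp y') x := by
  refine HasFDerivAt.fun_sum fun i _ => ?_
  simpa using (hasFDerivAt_pi'.1 h i).pow 2

end Calculus

section Forward

variable {N n L : ℕ} {r : Fin L → ℕ} {f : ∀ l : Fin L, (Fin N → ℝ) → (Fin (r l) → ℝ) → Fin N → ℝ}
  {Q : Matrix (Fin N) (Fin n) ℝ} {ω : ∀ l : Fin L, Fin (r l) → ℝ} {ξ : Fin n → ℝ}

theorem resX_succ_of_lt {t : ℕ} (ht : t < L) :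
    resX f Q ω ξ (t + 1) = resX f Q ω ξ t + f ⟨t, ht⟩ (resX f Q ω ξ t) (ω ⟨t, ht⟩) := by
  rw [resX, dif_pos ht]

theorem resX_update_of_le (l : Fin L) (w : Fin (r l) → ℝ) {t : ℕ} (ht : t ≤ l) :
    resX f Q (update ω l w) ξ t = resX f Q ω ξ t := by
  induction t with
  | zero => rfl
  | succ s ih =>
    have hsl : s < l := ht
    rw [resX_succ_of_lt (hsl.trans l.isLt), resX_succ_of_lt, ih hsl.le,
      update_of_ne (Fin.ne_of_lt hsl)]

theorem resX_update_succ (l : Fin L) (w : Fin (r l) → ℝ) :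
    resX f Q (update ω l w) ξ (l + 1) = resX f Q ω ξ l + f l (resX f Q ω ξ l) w := by
  rw [resX_succ_of_lt l.isLt, resX_update_of_le l w le_rfl, update_self]

theorem exists_hasFDerivAt_resX_update
    (hf : ∀ l, Differentiable ℝ fun p : (Fin N → ℝ) × (Fin (r l) → ℝ) => f l p.1 p.2)
    {lam : ℕ → Fin N → ℝ}
    (hlam : ∀ (t : Fin L) j, lam t j = lam (t + 1) j +
      ∑ i, fderiv ℝ (fun z => f t z (ω t) i) (resX f Q ω ξ t) (Pi.single j 1) * lam (t + 1) i)
    (l : Fin L) {t : ℕ} (hlt : l + 1 ≤ t) (htL : t ≤ L) :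
    ∃ D : (Fin (r l) → ℝ) →L[ℝ] Fin N → ℝ,
      HasFDerivAt (fun w => resX f Q (update ω l w) ξ t) D (ω l) ∧
      ∀ v, lam t ⬝ᵥ D v = lam (l + 1) ⬝ᵥ fderiv ℝ (f l (resX f Q ω ξ l)) (ω l) v := by
  induction t, hlt using Nat.le_induction with
  | base =>
    refine ⟨fderiv ℝ (f l (resX f Q ω ξ l)) (ω l), ?_, fun v => rfl⟩
    simp_rw [resX_update_succ]
    exact ((hf l).differentiableAt_right _ _).hasFDerivAt.const_add _
  | succ t hlt ih =>
    have ht : t < L := htL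
    obtain ⟨D, hD, hadj⟩ := ih ht.le
    set J := fderiv ℝ (fun z => f ⟨t, ht⟩ z (ω ⟨t, ht⟩)) (resX f Q ω ξ t)
    have hJ : HasFDerivAt (fun z => f ⟨t, ht⟩ z (ω ⟨t, ht⟩)) J
        (resX f Q (update ω l (ω l)) ξ t) := by
      rw [update_eq_self]
      exact ((hf _).differentiableAt_left _ _).hasFDerivAt
    have hne : (⟨t, ht⟩ : Fin L) ≠ l := Fin.ne_of_gt hlt
    have hstep : ∀ j, lam t j = lam (t + 1) j + ∑ i, J (Pi.single j 1) i * lam (t + 1) i := by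
      intro j
      simp_rw [hlam ⟨t, ht⟩ j,
        fderiv_apply ((hf ⟨t, ht⟩).differentiableAt_left (resX f Q ω ξ t) (ω ⟨t, ht⟩))]
      rfl
    refine ⟨D + J.comp D, ?_, fun v => ?_⟩
    · simp_rw [resX_succ_of_lt ht, update_of_ne hne]
      exact hD.add (hJ.comp (g := fun z => f ⟨t, ht⟩ z (ω ⟨t, ht⟩)) (ω l) hD)
    · rw [← hadj,
        dotProduct_eq_dotProduct_add_of_adjoint (J : (Fin N → ℝ) →ₗ[ℝ] Fin N → ℝ) hstep]
      rfl

end Forward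

theorem stmt_12_general (n m N L K : ℕ) (r : Fin L → ℕ)
    (P : Matrix (Fin m) (Fin N) ℝ) (Q : Matrix (Fin N) (Fin n) ℝ)
    (f : ∀ l : Fin L, (Fin N → ℝ) → (Fin (r l) → ℝ) → (Fin N → ℝ))
    (hf : ∀ l, ContDiff ℝ 1 fun p : (Fin N → ℝ) × (Fin (r l) → ℝ) => f l p.1 p.2)
    (ξ : Fin K → Fin n → ℝ) (Fv : Fin K → Fin m → ℝ)
    (ω : ∀ l : Fin L, Fin (r l) → ℝ)
    (lam : Fin K → ℕ → Fin N → ℝ)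
    (hlamL : ∀ k, lam k L =
      (1 / (K : ℝ)) • (Matrix.transpose P).mulVec
        (P.mulVec (resX f Q ω (ξ k) L) - Fv k))
    (hlam : ∀ k, ∀ l : Fin L, ∀ j,
      lam k l j = lam k (l + 1) j +
        ∑ i, fderiv ℝ (fun z => f l z (ω l) i) (resX f Q ω (ξ k) l) (Pi.single j 1) *
          lam k (l + 1) i) :
    ∀ l : Fin L,
      DifferentiableAt ℝ
        (fun w : Fin (r l) → ℝ => (1 / (2 * (K : ℝ))) * ∑ k, ∑ i,
          (P.mulVec (resX f Q (Function.update ω l w) (ξ k) L) i - Fv k i) ^ 2)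
        (ω l) ∧
      ∀ j : Fin (r l),
        fderiv ℝ
          (fun w : Fin (r l) → ℝ => (1 / (2 * (K : ℝ))) * ∑ k, ∑ i,
            (P.mulVec (resX f Q (Function.update ω l w) (ξ k) L) i - Fv k i) ^ 2)
          (ω l) (Pi.single j 1) =
        ∑ k, ∑ i,
          fderiv ℝ (fun w => f l (resX f Q ω (ξ k) l) w i) (ω l) (Pi.single j 1) *
            lam k (l + 1) i := by
  intro l
  have hfd : ∀ l, Differentiable ℝ fun p : (Fin N → ℝ) × (Fin (r l) → ℝ) => f l p.1 p.2 :=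
    fun l => (hf l).differentiable one_ne_zero
  choose D hD hadj using fun k => exists_hasFDerivAt_resX_update hfd (hlam k) l l.isLt le_rfl
  have hE : HasFDerivAt
      (fun w : Fin (r l) → ℝ => (1 / (2 * (K : ℝ))) * ∑ k, ∑ i,
        (P.mulVec (resX f Q (Function.update ω l w) (ξ k) L) i - Fv k i) ^ 2) _ (ω l) :=
    (HasFDerivAt.fun_sum fun k _ =>
      (((hD k).matrix_mulVec P).sub_const (Fv k)).sum_sq).const_mul _
  refine ⟨hE.differentiableAt, fun j => ?_⟩
  have hrhs : ∀ k, ∑ i, fderiv ℝ (fun w => f l (resX f Q ω (ξ k) l) w i) (ω l) (Pi.single j 1) *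
      lam k (l + 1) i = lam k L ⬝ᵥ D k (Pi.single j 1) := by
    intro k
    simp_rw [hadj, dotProduct_comm (lam k _),
      fderiv_apply ((hfd l).differentiableAt_right (resX f Q ω (ξ k) l) (ω l))]
    rfl
  simp_rw [hE.fderiv, hrhs, hlamL, smul_dotProduct, mulVec_transpose, ← dotProduct_mulVec]
  simp only [update_eq_self, Pi.sub_apply, _root_.smul_apply, _root_.sum_apply,
    ContinuousLinearMap.comp_apply, LinearMap.coe_toContinuousLinearMap', mulVecLin_apply,
    ContinuousLinearMap.proj_apply, smul_eq_mul, Finset.mul_sum, dotProduct]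
  exact Finset.sum_congr rfl fun k _ => Finset.sum_congr rfl fun i _ => by ring

/-- error backpropagation for a general ResNet: the gradient of the loss
with respect to each design parameter ω⁽ˡ⁾ is Σ_k (∇_ω f⁽ˡ⁾)ᵀ(x⁽ˡ'ᵏ⁾, ω⁽ˡ⁾) λ⁽ˡ⁺¹'ᵏ⁾. -/
theorem stmt_12 (n m N L K : ℕ) (hK : 0 < K) (r : Fin L → ℕ)
    (P : Matrix (Fin m) (Fin N) ℝ) (Q : Matrix (Fin N) (Fin n) ℝ)
    (f : ∀ l : Fin L, (Fin N → ℝ) → (Fin (r l) → ℝ) → (Fin N → ℝ))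
    (hf : ∀ l, ContDiff ℝ 1 fun p : (Fin N → ℝ) × (Fin (r l) → ℝ) => f l p.1 p.2)
    (ξ : Fin K → Fin n → ℝ) (Fv : Fin K → Fin m → ℝ)
    (ω : ∀ l : Fin L, Fin (r l) → ℝ)
    (lam : Fin K → ℕ → Fin N → ℝ)
    (hlamL : ∀ k, lam k L =
      (1 / (K : ℝ)) • (Matrix.transpose P).mulVec
        (P.mulVec (resX f Q ω (ξ k) L) - Fv k))
    (hlam : ∀ k, ∀ l : Fin L, ∀ j,
      lam k l j = lam k (l + 1) j +
        ∑ i, fderiv ℝ (fun z => f l z (ω l) i) (resX f Q ω (ξ k) l) (Pi.single j 1) *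
          lam k (l + 1) i) :
    ∀ l : Fin L,
      DifferentiableAt ℝ
        (fun w : Fin (r l) → ℝ => (1 / (2 * (K : ℝ))) * ∑ k, ∑ i,
          (P.mulVec (resX f Q (Function.update ω l w) (ξ k) L) i - Fv k i) ^ 2)
        (ω l) ∧
      ∀ j : Fin (r l),
        fderiv ℝ
          (fun w : Fin (r l) → ℝ => (1 / (2 * (K : ℝ))) * ∑ k, ∑ i,
            (P.mulVec (resX f Q (Function.update ω l w) (ξ k) L) i - Fv k i) ^ 2)
          (ω l) (Pi.single j 1) =
        ∑ k, ∑ i,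
          fderiv ℝ (fun w => f l (resX f Q ω (ξ k) l) w i) (ω l) (Pi.single j 1) *
            lam k (l + 1) i :=
  stmt_12_general n m N L K r P Q f hf ξ Fv ω lam hlamL hlam
end

section
/- Let m ≤ n be positive integers, A ∈ ℝ^{m×n} with rank(A) = m, and L ∈ ℕ. Suppose G : ℝ^n → ℝ^m has the form G(ξ) = Σ_{l=1}^{L} α^(l) ⊙ 𝛔(C^(l)ξ + d^(l)) with α^(l), d^(l) ∈ ℝ^m and C^(l) ∈ ℝ^{m×n} satisfying rank(C^(l)) = m and, when m = n, sgn(det C^(l)) = sgn(det A). Then there exist vectors α^(l) ∈ ℝ^m, matrices β^(l) ∈ ℝ^{n×n}, and vectors γ^(l) ∈ ℝ^n (l = 1,…,L) such that for every ξ ∈ ℝ^n, the sequences defined by x^(0) = ξ, y^(0) = 0, x^(l) = x^(l−1) + β^(l)x^(l−1) + γ^(l), y^(l) = y^(l−1) + α^(l) ⊙ 𝛔(Ax^(l)) for l = 1,…,L satisfy y^(L) = G(ξ). -/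
/-!
Since `A` and each `C l` are surjective with kernels of equal dimension, `C l = A * M l` with
`M l` invertible, and `d l = A *ᵥ c l`. Prepending `N 0 = 1`, `c' 0 = 0` to these sequences, the
residual blocks `β l = N (l+1) * (N l)⁻¹ - 1`, `γ l = c' (l+1) - N (l+1) * (N l)⁻¹ *ᵥ c' l` keep
every state on the affine trajectory `x k = N k *ᵥ ξ + c' k`. Hence
`A *ᵥ x (l+1) = C l *ᵥ ξ + d l`, and `y` accumulates exactly the terms of `G ξ`.
-/

open Module Matrix

theorem LinearMap.exists_linearEquiv_prod_ker_fst_eq {K V W : Type*} [DivisionRing K]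
    [AddCommGroup V] [Module K V] [AddCommGroup W] [Module K W] {f : V →ₗ[K] W}
    (hf : Function.Surjective f) : ∃ Φ : V ≃ₗ[K] W × ker f, ∀ v, (Φ v).1 = f v := by
  obtain ⟨q, hq⟩ := (ker f).exists_isCompl
  exact ⟨equivProdOfSurjectiveOfIsCompl f ((ker f).projectionOnto q hq) (range_eq_top.2 hf)
    (Submodule.range_projectionOnto hq) (by rwa [Submodule.ker_projectionOnto]), fun _ => rfl⟩

theorem LinearMap.exists_linearEquiv_comp_eq_of_surjective {K V W : Type*} [DivisionRing K]
    [AddCommGroup V] [Module K V] [FiniteDimensional K V] [AddCommGroup W] [Module K W]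
    {f g : V →ₗ[K] W} (hf : Function.Surjective f) (hg : Function.Surjective g) :
    ∃ e : V ≃ₗ[K] V, f ∘ₗ e = g := by
  obtain ⟨Φf, hΦf⟩ := exists_linearEquiv_prod_ker_fst_eq hf
  obtain ⟨Φg, hΦg⟩ := exists_linearEquiv_prod_ker_fst_eq hg
  have hker : finrank K (ker g) = finrank K (ker f) := by
    have hf' := f.finrank_range_add_finrank_ker
    have hg' := g.finrank_range_add_finrank_ker
    rw [range_eq_top.2 hf, finrank_top] at hf'
    rw [range_eq_top.2 hg, finrank_top] at hg'
    omega
  refine ⟨Φg ≪≫ₗ (LinearEquiv.refl K W).prodCongr (LinearEquiv.ofFinrankEq _ _ hker) ≪≫ₗ Φf.symm,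
    ?_⟩
  ext v
  simp [← hΦf, hΦg]

theorem Matrix.mulVec_surjective_of_rank_eq {m n K : Type*} [Fintype m] [Fintype n] [Field K]
    {A : Matrix m n K} (hA : A.rank = Fintype.card m) : Function.Surjective A.mulVec := by
  have hrange : LinearMap.range A.mulVecLin = ⊤ :=
    Submodule.eq_top_of_finrank_eq (by rw [← Matrix.rank, hA, finrank_fintype_fun_eq_card])
  exact LinearMap.range_eq_top.1 hrange

theorem Matrix.exists_isUnit_mul_eq_of_rank_eq {m n K : Type*} [Fintype m] [Fintype n]
    [DecidableEq n] [Field K] {A C : Matrix m n K} (hA : A.rank = Fintype.card m)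
    (hC : C.rank = Fintype.card m) : ∃ M : Matrix n n K, IsUnit M ∧ A * M = C := by
  obtain ⟨e, he⟩ := LinearMap.exists_linearEquiv_comp_eq_of_surjective
    (f := A.mulVecLin) (g := C.mulVecLin) (mulVec_surjective_of_rank_eq hA)
    (mulVec_surjective_of_rank_eq hC)
  refine ⟨LinearMap.toMatrix' e, ?_, ?_⟩
  · refine IsUnit.of_mul_eq_one (LinearMap.toMatrix' e.symm) ?_
    rw [← LinearMap.toMatrix'_comp]
    simp
  · apply Matrix.toLin'.injective
    rw [Matrix.toLin'_mul, Matrix.toLin'_toMatrix']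
    exact he

theorem Fin.apply_last_eq_sum_of_succ {M : Type*} [AddCommMonoid M] {L : ℕ} (f : Fin L → M)
    {y : Fin (L + 1) → M} (h0 : y 0 = 0) (hsucc : ∀ l, y l.succ = y l.castSucc + f l) :
    y (Fin.last L) = ∑ l, f l := by
  have hy : y = Fin.partialSum f := funext fun k => by
    induction k using Fin.induction with
    | zero => simp [h0]
    | succ l ih => rw [hsucc, ih, Fin.partialSum_succ]
  rw [hy, Fin.partialSum, Fin.val_last, List.take_of_length_le (by simp), List.sum_ofFn]

theorem Matrix.eq_mulVec_add_of_residual_step {n K : Type*} [Fintype n] [DecidableEq n]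
    [CommRing K] {L : ℕ} (N : Fin (L + 1) → Matrix n n K) (hN : ∀ k, IsUnit (N k))
    (c : Fin (L + 1) → n → K) (ξ : n → K) {x : Fin (L + 1) → n → K}
    (h0 : x 0 = N 0 *ᵥ ξ + c 0)
    (hsucc : ∀ l : Fin L, x l.succ = x l.castSucc
      + (N l.succ * (N l.castSucc)⁻¹ - 1) *ᵥ x l.castSucc
      + (c l.succ - (N l.succ * (N l.castSucc)⁻¹) *ᵥ c l.castSucc)) :
    ∀ k, x k = N k *ᵥ ξ + c k := by
  intro k
  induction k using Fin.induction with
  | zero => exact h0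
  | succ l ih =>
    have hcancel : N l.succ * (N l.castSucc)⁻¹ * N l.castSucc = N l.succ :=
      nonsing_inv_mul_cancel_right _ _ ((isUnit_iff_isUnit_det _).1 (hN _))
    rw [hsucc, ih, sub_mulVec, one_mulVec, mulVec_add, mulVec_mulVec, hcancel]
    abel

theorem stmt_13_general (m n : ℕ) (σ : ℝ → ℝ)
    (A : Matrix (Fin m) (Fin n) ℝ) (hA : A.rank = m) (L : ℕ)
    (α d : Fin L → Fin m → ℝ) (C : Fin L → Matrix (Fin m) (Fin n) ℝ)
    (hrank : ∀ l, (C l).rank = m)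
    (G : (Fin n → ℝ) → Fin m → ℝ)
    (hG : ∀ ξ i, G ξ i = ∑ l, α l i * σ ((C l).mulVec ξ i + d l i)) :
    ∃ (α' : Fin L → Fin m → ℝ) (β : Fin L → Matrix (Fin n) (Fin n) ℝ)
      (γ : Fin L → Fin n → ℝ),
      ∀ ξ : Fin n → ℝ, ∀ (x : Fin (L + 1) → Fin n → ℝ) (y : Fin (L + 1) → Fin m → ℝ),
        x 0 = ξ → y 0 = 0 →
        (∀ l : Fin L, x l.succ = x l.castSucc + (β l).mulVec (x l.castSucc) + γ l) →
        (∀ l : Fin L, ∀ i, y l.succ i = y l.castSucc i + α' l i * σ (A.mulVec (x l.succ) i)) →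
        y (Fin.last L) = G ξ := by
  replace hA : A.rank = Fintype.card (Fin m) := by rwa [Fintype.card_fin]
  replace hrank : ∀ l, (C l).rank = Fintype.card (Fin m) := by simpa using hrank
  choose M hM hAM using fun l => exists_isUnit_mul_eq_of_rank_eq hA (hrank l)
  choose c hAc using fun l => mulVec_surjective_of_rank_eq hA (d l)
  set N : Fin (L + 1) → Matrix (Fin n) (Fin n) ℝ := Fin.cons 1 M
  set c' : Fin (L + 1) → Fin n → ℝ := Fin.cons 0 c
  refine ⟨α, fun l => N l.succ * (N l.castSucc)⁻¹ - 1,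
    fun l => c' l.succ - (N l.succ * (N l.castSucc)⁻¹) *ᵥ c' l.castSucc, ?_⟩
  intro ξ x y hx0 hy0 hx hy
  have hx_eq := eq_mulVec_add_of_residual_step N (Fin.cases isUnit_one hM) c' ξ
    (by simp [N, c', hx0]) hx
  have hAx : ∀ l, A *ᵥ x l.succ = C l *ᵥ ξ + d l := fun l => by
    simp [hx_eq, N, c', mulVec_add, mulVec_mulVec, hAM, hAc]
  rw [Fin.apply_last_eq_sum_of_succ (fun l i => α l i * σ ((C l *ᵥ ξ) i + d l i)) hy0
    fun l => funext fun i => by rw [hy, hAx]; rfl]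
  funext i
  simp [hG]

/-- Lemma: exact representation of a ridge-sum by a ResNet. -/
theorem stmt_13 (m n : ℕ) (hm : 0 < m) (hmn : m ≤ n) (σ : ℝ → ℝ)
    (A : Matrix (Fin m) (Fin n) ℝ) (hA : A.rank = m) (L : ℕ) (hL : 0 < L)
    (α d : Fin L → Fin m → ℝ) (C : Fin L → Matrix (Fin m) (Fin n) ℝ)
    (hrank : ∀ l, (C l).rank = m)
    (hsgn : ∀ h : m = n, ∀ l,
      Real.sign ((C l).submatrix id (finCongr h)).det =
        Real.sign (A.submatrix id (finCongr h)).det)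
    (G : (Fin n → ℝ) → Fin m → ℝ)
    (hG : ∀ ξ i, G ξ i = ∑ l, α l i * σ ((C l).mulVec ξ i + d l i)) :
    ∃ (α' : Fin L → Fin m → ℝ) (β : Fin L → Matrix (Fin n) (Fin n) ℝ)
      (γ : Fin L → Fin n → ℝ),
      ∀ ξ : Fin n → ℝ, ∀ (x : Fin (L + 1) → Fin n → ℝ) (y : Fin (L + 1) → Fin m → ℝ),
        x 0 = ξ → y 0 = 0 →
        (∀ l : Fin L, x l.succ = x l.castSucc + (β l).mulVec (x l.castSucc) + γ l) →
        (∀ l : Fin L, ∀ i, y l.succ i = y l.castSucc i + α' l i * σ (A.mulVec (x l.succ) i)) →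
        y (Fin.last L) = G ξ :=
  stmt_13_general m n σ A hA L α d C hrank G hG
end
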